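/- Chain rule for KL divergence in a sequential decision process: if P and Q are the laws of a sequence Z^(t) = (Z(1),…,Z(t)) such that the conditional law of the action given the past is the same under P and Q (same policy), and the conditional law of the observation at step s given the past and the action differs only through the reward distribution of the chosen arm, then KL(P‖Q) = ∑_{s=1}^{t} E_P[ KL of reward distribution of the arm chosen at step s under P vs Q ]. In particular, for Bernoulli rewards where arm k has mean μ_k under P and mean β under Q (and all other arms are identical), KL(P‖Q) = kl(μ_k, β) · E_P[T_k(t)], where T_k(t) is the number of times arm k is chosen in the first t steps. -/

import Mathlib

/-! The log-likelihood ratio of a trajectory is a sum over its steps: the policy factors cancel,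
and only the steps pulling arm `k` contribute, with `log (bern (μ k) r / bern β r)` for the
observed reward `r`. Given the past and the pull of `k`, this term has mean `klBin (μ k) β`, so
the centered increments have mean zero under `p` (tower property of the sequential product),
which leaves `klBin (μ k) β` times the expected number of pulls of `k`. -/

open Real

/-- Bernoulli probability mass: `bern θ true = θ`, `bern θ false = 1 - θ`. -/
def bern (θ : ℝ) (b : Bool) : ℝ := if b then θ else 1 - θ

/-- Binary (Bernoulli) KL divergence. -/
noncomputable def klBin (a b : ℝ) : ℝ :=
  a * Real.log (a / b) + (1 - a) * Real.log ((1 - a) / (1 - b))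

open Finset

section Trajectory

variable {α : Type*} {n : ℕ}

def trajectoryProb (κ : (s : Fin n) → (Fin s.val → α) → α → ℝ) (z : Fin n → α) : ℝ :=
  ∏ s, κ s (fun j => z ⟨j.val, j.isLt.trans s.isLt⟩) (z s)

lemma trajectoryProb_snoc (κ : (s : Fin (n + 1)) → (Fin s.val → α) → α → ℝ)
    (y : Fin n → α) (x : α) :
    trajectoryProb κ (Fin.snoc y x) =
      trajectoryProb (fun s => κ s.castSucc) y * κ (Fin.last n) y x := by
  have hprefix : ∀ (m : ℕ) (h : m < n + 1) (hm : m < n),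
      Fin.snoc (α := fun _ => α) y x ⟨m, h⟩ = y ⟨m, hm⟩ :=
    fun m _ hm => Fin.snoc_castSucc (α := fun _ => α) (i := ⟨m, hm⟩) ..
  -- `hm` is not determined by the left-hand side; `omega` discharges it as a side condition.
  simp (disch := omega) only [trajectoryProb, Fin.prod_univ_castSucc, Fin.snoc_castSucc,
    Fin.snoc_last, Fin.val_castSucc, Fin.val_last, hprefix]

lemma sum_trajectoryProb_mul_eq_zero [Fintype α] :
    ∀ {n : ℕ} (κ : (s : Fin n) → (Fin s.val → α) → α → ℝ), (∀ s h, ∑ x, κ s h x = 1) →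
      ∀ (s₀ : Fin n) (g : α → ℝ), (∀ h, ∑ x, κ s₀ h x * g x = 0) →
        ∑ z, trajectoryProb κ z * g (z s₀) = 0
  | 0, _, _, s₀, _, _ => s₀.elim0
  | n + 1, κ, hκ, s₀, g, hg => by
    rw [← (Fin.snocEquiv fun _ => α).sum_comp, Fintype.sum_prod_type, Finset.sum_comm]
    simp only [show ∀ p, Fin.snocEquiv (fun _ => α) p = Fin.snoc p.2 p.1 from fun _ => rfl,
      trajectoryProb_snoc]
    induction s₀ using Fin.lastCases with
    | last =>
      simp only [Fin.snoc_last, mul_assoc, ← mul_sum, hg, mul_zero, sum_const_zero]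
    | cast i =>
      simp only [Fin.snoc_castSucc, mul_right_comm _ _ (g _), ← mul_sum, hκ, mul_one]
      exact sum_trajectoryProb_mul_eq_zero (fun s => κ s.castSucc) (fun s => hκ s.castSucc) i g hg

end Trajectory

lemma log_prod_mul_div_prod_mul {ι : Type*} (s : Finset ι) (a b c : ι → ℝ)
    (hab : ∏ i ∈ s, a i * b i ≠ 0) (hc : ∀ i ∈ s, c i ≠ 0) :
    log ((∏ i ∈ s, a i * b i) / ∏ i ∈ s, a i * c i) = ∑ i ∈ s, log (b i / c i) := by
  have hfactor : ∀ i ∈ s, a i ≠ 0 ∧ b i ≠ 0 := fun i hi =>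
    mul_ne_zero_iff.mp (prod_ne_zero_iff.mp hab i hi)
  rw [← prod_div_distrib, prod_congr rfl fun i hi => mul_div_mul_left _ _ (hfactor i hi).1,
    log_prod fun i hi => div_ne_zero (hfactor i hi).2 (hc i hi)]

lemma bern_ne_zero {θ : ℝ} (h0 : θ ≠ 0) (h1 : θ ≠ 1) (b : Bool) : bern θ b ≠ 0 := by
  cases b <;> simp [bern, sub_eq_zero, h0, Ne.symm h1]

lemma sum_bern (θ : ℝ) : ∑ b, bern θ b = 1 := by
  simp [bern]

lemma sum_bern_mul_log_div_bern (a β : ℝ) :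
    ∑ b, bern a b * log (bern a b / bern β b) = klBin a β := by
  simp [bern, klBin]

lemma sum_bern_mul_log_div_bern_sub_klBin (a β : ℝ) :
    ∑ b, bern a b * (log (bern a b / bern β b) - klBin a β) = 0 := by
  simp only [mul_sub, sum_sub_distrib, sum_bern_mul_log_div_bern, ← sum_mul, sum_bern, one_mul,
    sub_self]

section Bandit

variable {t K : ℕ}

def banditKernel (pol : (s : Fin t) → (Fin s.val → Fin K × Bool) → Fin K → ℝ) (μ : Fin K → ℝ)
    (s : Fin t) (h : Fin s.val → Fin K × Bool) (x : Fin K × Bool) : ℝ :=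
  pol s h x.1 * bern (μ x.1) x.2

variable (pol : (s : Fin t) → (Fin s.val → Fin K × Bool) → Fin K → ℝ) (μ : Fin K → ℝ)

lemma sum_banditKernel (hpol1 : ∀ s h, ∑ a, pol s h a = 1) (s h) :
    ∑ x, banditKernel pol μ s h x = 1 := by
  simp only [banditKernel, Fintype.sum_prod_type, ← mul_sum, sum_bern, mul_one]
  exact hpol1 s h

lemma sum_banditKernel_mul_indicator (k : Fin K) (g : Bool → ℝ) (s h) :
    ∑ x, banditKernel pol μ s h x * ((if x.1 = k then 1 else 0) * g x.2) =
      pol s h k * ∑ b, bern (μ k) b * g b := by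
  simp [banditKernel, Fintype.sum_prod_type, mul_assoc, mul_add]

lemma log_trajectoryProb_banditKernel_div {ν : Fin K → ℝ} {k : Fin K} {β : ℝ}
    (hβ0 : β ≠ 0) (hβ1 : β ≠ 1)
    (hν : ∀ a, a ≠ k → ν a = μ a) (hνk : ν k = β) (z : Fin t → Fin K × Bool)
    (hz : trajectoryProb (banditKernel pol μ) z ≠ 0) :
    log (trajectoryProb (banditKernel pol μ) z / trajectoryProb (banditKernel pol ν) z) =
      ∑ s, (if (z s).1 = k then 1 else 0) * log (bern (μ k) (z s).2 / bern β (z s).2) := by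
  have hreward : ∀ s, bern (μ (z s).1) (z s).2 ≠ 0 := fun s =>
    right_ne_zero_of_mul (prod_ne_zero_iff.mp hz s (mem_univ s))
  unfold trajectoryProb banditKernel at *
  rw [log_prod_mul_div_prod_mul _ _ _ _ hz]
  · refine sum_congr rfl fun s _ => ?_
    by_cases hk : (z s).1 = k
    · simp [hk, hνk]
    · simp [hk, hν _ hk, div_self (hreward s)]
  · intro s _
    by_cases hk : (z s).1 = k
    · rw [hk, hνk]; exact bern_ne_zero hβ0 hβ1 _
    · rw [hν _ hk]; exact hreward s

end Bandit

theorem kl_chain_rule_bandit_general (t K : ℕ) (k : Fin K) (μ ν : Fin K → ℝ) (β : ℝ)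
    (hβ0 : 0 < β) (hβ1 : β < 1)
    (hν : ∀ a, a ≠ k → ν a = μ a) (hνk : ν k = β)
    (pol : (s : Fin t) → (Fin s.val → Fin K × Bool) → Fin K → ℝ)
    (hpol1 : ∀ s h, ∑ a, pol s h a = 1)
    (p q : (Fin t → Fin K × Bool) → ℝ)
    (hp : ∀ z, p z = ∏ s : Fin t,
      pol s (fun j => z ⟨j.val, j.isLt.trans s.isLt⟩) (z s).1 * bern (μ (z s).1) (z s).2)
    (hq : ∀ z, q z = ∏ s : Fin t,
      pol s (fun j => z ⟨j.val, j.isLt.trans s.isLt⟩) (z s).1 * bern (ν (z s).1) (z s).2) :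
    ∑ z : Fin t → Fin K × Bool, p z * Real.log (p z / q z)
      = klBin (μ k) β *
        ∑ z : Fin t → Fin K × Bool,
          p z * ∑ s : Fin t, (if (z s).1 = k then (1 : ℝ) else 0) := by
  obtain rfl : p = trajectoryProb (banditKernel pol μ) := funext hp
  obtain rfl : q = trajectoryProb (banditKernel pol ν) := funext hq
  set P := trajectoryProb (banditKernel pol μ)
  set pulled : (Fin t → Fin K × Bool) → Fin t → ℝ := fun z s => if (z s).1 = k then 1 else 0
  set llr : Bool → ℝ := fun b => log (bern (μ k) b / bern β b)
  set c := klBin (μ k) β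
  have hcentered : ∀ s, ∑ z, P z * (pulled z s * (llr (z s).2 - c)) = 0 := fun s =>
    sum_trajectoryProb_mul_eq_zero _ (sum_banditKernel pol μ hpol1) s
      (fun x => (if x.1 = k then 1 else 0) * (llr x.2 - c)) fun h => by
      rw [sum_banditKernel_mul_indicator pol μ k fun b => llr b - c]
      exact mul_eq_zero_of_right _ (sum_bern_mul_log_div_bern_sub_klBin (μ k) β)
  have hsplit : ∀ z, P z * log (P z / trajectoryProb (banditKernel pol ν) z) =
      ∑ s, P z * (pulled z s * (llr (z s).2 - c)) + c * (P z * ∑ s, pulled z s) := fun z => by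
    rcases eq_or_ne (P z) 0 with hz | hz
    · simp [hz]
    rw [log_trajectoryProb_banditKernel_div pol μ hβ0.ne' hβ1.ne hν hνk z hz, ← mul_sum]
    simp only [mul_sub, sum_sub_distrib, ← sum_mul]
    ring
  rw [sum_congr rfl fun z _ => hsplit z, sum_add_distrib, sum_comm, ← mul_sum,
    sum_congr rfl fun s _ => hcentered s, sum_const_zero, zero_add]

/-- Chain rule for KL divergence in a bandit process: let `p` and `q` be the laws of a
trajectory `z = (a₁,r₁,…,a_t,r_t)` of (action, Bernoulli reward) pairs, generated by the
same (history-dependent, randomized) policy `pol`, with arm means `μ` under `p` and `ν`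
under `q`, where `ν` agrees with `μ` except on arm `k` where `ν k = β`. Then
`KL(p‖q) = kl(μ k, β) · E_p[T_k(t)]`, where `T_k(t)` is the number of pulls of arm `k`. -/
theorem kl_chain_rule_bandit (t K : ℕ) (k : Fin K) (μ ν : Fin K → ℝ) (β : ℝ)
    (hμ : ∀ a, 0 < μ a ∧ μ a < 1) (hβ0 : 0 < β) (hβ1 : β < 1)
    (hν : ∀ a, a ≠ k → ν a = μ a) (hνk : ν k = β)
    (pol : (s : Fin t) → (Fin s.val → Fin K × Bool) → Fin K → ℝ)
    (hpol0 : ∀ s h a, 0 ≤ pol s h a) (hpol1 : ∀ s h, ∑ a, pol s h a = 1)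
    (p q : (Fin t → Fin K × Bool) → ℝ)
    (hp : ∀ z, p z = ∏ s : Fin t,
      pol s (fun j => z ⟨j.val, j.isLt.trans s.isLt⟩) (z s).1 * bern (μ (z s).1) (z s).2)
    (hq : ∀ z, q z = ∏ s : Fin t,
      pol s (fun j => z ⟨j.val, j.isLt.trans s.isLt⟩) (z s).1 * bern (ν (z s).1) (z s).2) :
    ∑ z : Fin t → Fin K × Bool, p z * Real.log (p z / q z)
      = klBin (μ k) β *
        ∑ z : Fin t → Fin K × Bool,
          p z * ∑ s : Fin t, (if (z s).1 = k then (1 : ℝ) else 0) :=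
  kl_chain_rule_bandit_general t K k μ ν β hβ0 hβ1 hν hνk pol hpol1 p q hp hq
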